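/- arXiv:1311.2829 — 9 statements merged into one kernel-verified Lean document; each statement's English description precedes it below -/
import Mathlib

section
/- Let e and f both admit (2,0,2/5)-decompositions. Then f_e(0)·f_e(2/5) = (2/5 + 14(e|f))·f_e(2/5). -/
/-- A commutative (not necessarily associative) real algebra with a symmetric
invariant bilinear form, modelling the Griess algebra of an OZ-type VOA. -/
structure GriessAlg (B : Type*) [AddCommGroup B] [Module ℝ B] where
  mul : B →ₗ[ℝ] B →ₗ[ℝ] B
  bf : B →ₗ[ℝ] B →ₗ[ℝ] ℝ
  comm : ∀ x y, mul x y = mul y x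
  symm : ∀ x y, bf x y = bf y x
  invariant : ∀ x y z, bf (mul x y) z = bf x (mul y z)

/-- A `(2,0,2/5)`-decomposition for `e`: `B` is the internal direct sum of the
eigenspaces of `x ↦ e·x` for eigenvalues `2`, `0`, `2/5` (with projections
`pi2`, `pi0`, `piq`), the `2`-eigenspace is `ℝ e`, `e·e = 2e`, `(e|e) = 2/5`,
and the fusion rules hold. -/
structure Decomp {B : Type*} [AddCommGroup B] [Module ℝ B] (G : GriessAlg B) (e : B) where
  pi2 : B →ₗ[ℝ] B
  pi0 : B →ₗ[ℝ] B
  piq : B →ₗ[ℝ] B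
  sum_eq : ∀ x, pi2 x + pi0 x + piq x = x
  eig2 : ∀ x, G.mul e (pi2 x) = (2 : ℝ) • pi2 x
  eig0 : ∀ x, G.mul e (pi0 x) = 0
  eigq : ∀ x, G.mul e (piq x) = (2/5 : ℝ) • piq x
  proj2 : ∀ x, G.mul e x = (2 : ℝ) • x → pi2 x = x
  proj0 : ∀ x, G.mul e x = 0 → pi0 x = x
  projq : ∀ x, G.mul e x = (2/5 : ℝ) • x → piq x = x
  span2 : ∀ x, ∃ c : ℝ, pi2 x = c • e
  mul_ee : G.mul e e = (2 : ℝ) • e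
  bf_ee : G.bf e e = 2/5
  fusion00 : ∀ x y, G.mul e x = 0 → G.mul e y = 0 → piq (G.mul x y) = 0
  fusion0q : ∀ x y, G.mul e x = 0 → G.mul e y = (2/5 : ℝ) • y →
    G.mul e (G.mul x y) = (2/5 : ℝ) • G.mul x y
  fusionqq : ∀ x y, G.mul e x = (2/5 : ℝ) • x → G.mul e y = (2/5 : ℝ) • y →
    piq (G.mul x y) = 0

/-- The σ-involution attached to a `(2,0,2/5)`-decomposition: `+1` on
`B_e(2) ⊕ B_e(0)` and `-1` on `B_e(2/5)`. -/
def Decomp.sigma {B : Type*} [AddCommGroup B] [Module ℝ B] {G : GriessAlg B} {e : B}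
    (D : Decomp G e) : B →ₗ[ℝ] B :=
  D.pi2 + D.pi0 - D.piq

section Aux
variable {B : Type*} [AddCommGroup B] [Module ℝ B] {G : GriessAlg B} {e : B} (D : Decomp G e)

lemma smul_cancel_aux {a : ℝ} (ha : a ≠ 0) {v : B} (h : a • v = 0) : v = 0 := by
  have h2 := congrArg (fun w => a⁻¹ • w) h
  simpa [smul_smul, inv_mul_cancel₀ ha] using h2

lemma Decomp.piq_e : D.piq e = 0 := by
  have h2 : D.pi2 e = e := D.proj2 e D.mul_ee
  have hsum := D.sum_eq e
  rw [h2, add_assoc] at hsum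
  have h0 : D.pi0 e + D.piq e = 0 := add_eq_left.mp hsum
  have h1 : G.mul e (D.pi0 e + D.piq e) = 0 := by rw [h0, map_zero]
  rw [map_add, D.eig0, D.eigq, zero_add] at h1
  exact smul_cancel_aux (by norm_num) h1

lemma Decomp.bf_pi0 (x : B) : G.bf e (D.pi0 x) = 0 := by
  have h := G.invariant e e (D.pi0 x)
  rw [D.mul_ee, D.eig0] at h
  simp only [map_smul, map_zero, LinearMap.smul_apply, smul_eq_mul] at h
  linarith

lemma Decomp.bf_piq (x : B) : G.bf e (D.piq x) = 0 := by
  have h := G.invariant e e (D.piq x)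
  rw [D.mul_ee, D.eigq] at h
  simp only [map_smul, LinearMap.smul_apply, smul_eq_mul] at h
  linarith

lemma Decomp.pi2_eq (x : B) : D.pi2 x = ((5/2) * G.bf e x) • e := by
  obtain ⟨c, hc⟩ := D.span2 x
  have hx : G.bf e x = c * (2/5) := by
    conv_lhs => rw [← D.sum_eq x]
    rw [map_add, map_add, hc, map_smul, D.bf_pi0, D.bf_piq, D.bf_ee]
    simp [smul_eq_mul]
  rw [hc, hx]
  congr 1
  ring

lemma Decomp.mul_e (x : B) : G.mul e x = (5 * G.bf e x) • e + (2/5 : ℝ) • D.piq x := by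
  conv_lhs => rw [← D.sum_eq x]
  rw [map_add, map_add, D.eig2, D.eig0, D.eigq, D.pi2_eq x, smul_smul]
  have h : (2:ℝ) * ((5/2) * G.bf e x) = 5 * G.bf e x := by ring
  rw [h, add_zero]

end Aux

/-- If `e` and `f` both admit `(2,0,2/5)`-decompositions, then
`f_e(0)·f_e(2/5) = (2/5 + 14(e|f))·f_e(2/5)`. -/
theorem stmt_1 {B : Type*} [AddCommGroup B] [Module ℝ B] (G : GriessAlg B)
    (e f : B) (De : Decomp G e) (Df : Decomp G f) :
    G.mul (De.pi0 f) (De.piq f) = (2/5 + 14 * G.bf e f) • De.piq f := by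
  have hme : G.mul e f = (5 * G.bf e f) • e + (2/5:ℝ) • De.piq f := De.mul_e f
  have hmf : G.mul f e = (5 * G.bf e f) • f + (2/5:ℝ) • Df.piq e := by
    have h := Df.mul_e e
    rw [G.symm f e] at h
    exact h
  -- express Df.piq e in terms of e, f, De.piq f
  have heq : Df.piq e
      = De.piq f + (25 * G.bf e f / 2) • e - (25 * G.bf e f / 2) • f := by
    have h : (5 * G.bf e f) • e + (2/5:ℝ) • De.piq f
        = (5 * G.bf e f) • f + (2/5:ℝ) • Df.piq e := by
      rw [← hme, ← hmf, G.comm e f]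
    linear_combination (norm := module) (-5/2 : ℝ) • h
  -- piq-projections of the various products
  have hPfq : De.piq (De.piq f) = De.piq f := De.projq _ (De.eigq f)
  have hPe : De.piq e = 0 := De.piq_e
  have hP0q : De.piq (G.mul (De.pi0 f) (De.piq f)) = G.mul (De.pi0 f) (De.piq f) :=
    De.projq _ (De.fusion0q _ _ (De.eig0 f) (De.eigq f))
  have hPqq : De.piq (G.mul (De.piq f) (De.piq f)) = 0 :=
    De.fusionqq _ _ (De.eigq f) (De.eigq f)
  -- expand G.mul f (De.piq f)
  have hsplit : ∀ y : B, G.mul f y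
      = ((5/2) * G.bf e f) • G.mul e y + G.mul (De.pi0 f) y
        + G.mul (De.piq f) y := by
    intro y
    conv_lhs => rw [← De.sum_eq f, De.pi2_eq f]
    simp only [map_add, map_smul, LinearMap.add_apply, LinearMap.smul_apply]
  have hPffq : De.piq (G.mul f (De.piq f))
      = (G.bf e f) • De.piq f + G.mul (De.pi0 f) (De.piq f) := by
    rw [hsplit, De.eigq f]
    rw [map_add, map_add, map_smul, map_smul, hPfq, hP0q, hPqq, add_zero, smul_smul]
    congr 2
    ring
  have hPfe : De.piq (G.mul f e) = (2/5:ℝ) • De.piq f := by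
    rw [G.comm f e, hme, map_add, map_smul, map_smul, hPe, hPfq, smul_zero, zero_add]
  have hPff : De.piq (G.mul f f) = (2:ℝ) • De.piq f := by
    rw [Df.mul_ee, map_smul]
  -- the key eigen-equation, projected by De.piq
  have hkey := Df.eigq e
  rw [heq] at hkey
  have hH := congrArg De.piq hkey
  simp only [map_add, map_sub, map_smul] at hH
  rw [hPffq, hPfe, hPff, hPfq, hPe] at hH
  linear_combination (norm := module) hH
end

section
/- Let e and f both admit (2,0,2/5)-decompositions. Then (25(e|f) − 1)·f_e(2/5) = 0; in particular, if (e|f) ≠ 1/25 then f_e(2/5) = 0 and e·f = 5(e|f)·e. -/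
/-!
Write `λ = (e|f)` and `u = f_e(2/5)`. Since `B_e(2) = ℝe` is orthogonal to the other two eigenspaces,
`e·x = 5(e|x)·e + (2/5)·x_e(2/5)` for every `x`, hence `L_e² = (2/5)L_e + 8(e|·)e`, and likewise for `f`.
The fusion rules show that the `2/5`-component of `x·x` is twice that of `x·x_e(2/5)`, so `f·f = 2f` gives
`(f·u)_e(2/5) = u`. On the other hand `(2/5)u = e·f − 5λe`, so `(2/5)·f·u = L_f²e − 5λ L_f e`, which the
quadratic relation for `L_f` rewrites as `(2/5 − 5λ)·e·f + 8λf`; taking `2/5`-components with respect to `e`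
gives `(2/5)u = (4/25 + 6λ)u`, i.e. `(25λ − 1)u = 0`.
-/

namespace Decomp

variable {B : Type*} [AddCommGroup B] [Module ℝ B] {G : GriessAlg B} {e : B} (D : Decomp G e)

include D in
lemma bf_pi0_s2 (x : B) : G.bf e (D.pi0 x) = 0 := by
  have h := G.invariant e e (D.pi0 x)
  rw [D.eig0, D.mul_ee, map_zero, map_smul, LinearMap.smul_apply, smul_eq_mul] at h
  linarith

include D in
lemma bf_piq_s2 (x : B) : G.bf e (D.piq x) = 0 := by
  have h := G.invariant e e (D.piq x)
  rw [D.eigq, D.mul_ee, map_smul, map_smul, LinearMap.smul_apply, smul_eq_mul, smul_eq_mul] at h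
  linarith

lemma pi2_eq_s2 (x : B) : D.pi2 x = ((5/2 : ℝ) * G.bf e x) • e := by
  obtain ⟨c, hc⟩ := D.span2 x
  have hbf : G.bf e x = c * (2/5) := by
    conv_lhs => rw [← D.sum_eq x]
    rw [map_add, map_add, hc, map_smul, D.bf_pi0_s2, D.bf_piq_s2, D.bf_ee, smul_eq_mul]
    ring
  rw [hc, hbf]
  congr 1
  ring

lemma mul_eq (x : B) : G.mul e x = (5 * G.bf e x) • e + (2/5 : ℝ) • D.piq x := by
  conv_lhs => rw [← D.sum_eq x]
  rw [map_add, map_add, D.eig2, D.eig0, D.eigq, D.pi2_eq_s2]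
  module

include D in
lemma mul_mul_eq (x : B) :
    G.mul e (G.mul e x) = (2/5 : ℝ) • G.mul e x + (8 * G.bf e x) • e := by
  rw [D.mul_eq x, map_add, map_smul, map_smul, D.mul_ee, D.eigq]
  module

lemma piq_piq (x : B) : D.piq (D.piq x) = D.piq x :=
  D.projq _ (D.eigq x)

lemma piq_self : D.piq e = 0 := by
  have h := D.mul_eq e
  rw [D.mul_ee, D.bf_ee] at h
  have h' : (2/5 : ℝ) • D.piq e = 0 := by linear_combination (norm := module) -h
  exact (smul_eq_zero.mp h').resolve_left (by norm_num)

lemma piq_mul (x : B) : D.piq (G.mul e x) = (2/5 : ℝ) • D.piq x := by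
  rw [D.mul_eq, map_add, map_smul, map_smul, D.piq_self, D.piq_piq, smul_zero, zero_add]

/-- Only the mixed products `B_e(2) · B_e(2/5)` and `B_e(0) · B_e(2/5)` contribute to the
`2/5`-component, and they occur twice in `x·x` but once in `x·x_e(2/5)`. -/
lemma piq_mul_self (x : B) :
    D.piq (G.mul x x) = (2 : ℝ) • D.piq (G.mul x (D.piq x)) := by
  set c := (5/2 : ℝ) * G.bf e x
  set a := D.pi0 x
  set u := D.piq x
  have hx : x = c • e + a + u := by rw [← D.pi2_eq_s2, D.sum_eq]
  have haa : D.piq (G.mul a a) = 0 := D.fusion00 a a (D.eig0 x) (D.eig0 x)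
  have huu : D.piq (G.mul u u) = 0 := D.fusionqq u u (D.eigq x) (D.eigq x)
  have hau : D.piq (G.mul a u) = G.mul a u := D.projq _ (D.fusion0q a u (D.eig0 x) (D.eigq x))
  have hea : G.mul e a = 0 := D.eig0 x
  have heu : G.mul e u = (2/5 : ℝ) • u := D.eigq x
  have hu : D.piq u = u := D.piq_piq x
  clear_value c a u
  subst hx
  simp only [map_add, map_smul, LinearMap.add_apply, LinearMap.smul_apply, D.mul_ee,
    G.comm a e, G.comm u e, G.comm u a, hea, heu, haa, huu, hau, hu, D.piq_self, map_zero]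
  module

lemma piq_mul_piq_of_mul_self {x : B} (hx : G.mul x x = (2 : ℝ) • x) :
    D.piq (G.mul x (D.piq x)) = D.piq x := by
  have h := D.piq_mul_self x
  rw [hx, map_smul] at h
  exact (smul_right_injective B (two_ne_zero : (2 : ℝ) ≠ 0) h).symm

end Decomp

/-- If `e` and `f` both admit `(2,0,2/5)`-decompositions, then
`(25(e|f) − 1)·f_e(2/5) = 0`; in particular, if `(e|f) ≠ 1/25` then
`f_e(2/5) = 0` and `e·f = 5(e|f)·e`. -/
theorem stmt_2 {B : Type*} [AddCommGroup B] [Module ℝ B] (G : GriessAlg B)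
    (e f : B) (De : Decomp G e) (Df : Decomp G f) :
    (25 * G.bf e f - 1) • De.piq f = 0 ∧
    (G.bf e f ≠ 1/25 → De.piq f = 0 ∧ G.mul e f = (5 * G.bf e f) • e) := by
  set lam := G.bf e f
  set u := De.piq f
  have hef : G.mul e f = (5 * lam) • e + (2/5 : ℝ) • u := De.mul_eq f
  have hffe : G.mul f (G.mul f e) = (2/5 : ℝ) • G.mul f e + (8 * lam) • f := by
    rw [Df.mul_mul_eq, G.symm]
  have hfu : De.piq (G.mul f u) = u := De.piq_mul_piq_of_mul_self Df.mul_ee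
  have hkey : (2/5 : ℝ) • u = (4/25 + 6 * lam) • u := by
    have h : (2/5 : ℝ) • G.mul f u = (2/5 - 5 * lam) • G.mul e f + (8 * lam) • f := by
      have hu : (2/5 : ℝ) • u = G.mul e f - (5 * lam) • e := by rw [hef]; module
      rw [← map_smul, hu, map_sub, map_smul, G.comm e f, hffe]
      module
    have h' := congrArg De.piq h
    rw [map_smul, hfu, map_add, map_smul, map_smul, De.piq_mul] at h'
    rw [h']
    module
  have hmain : (25 * lam - 1) • u = 0 := by
    have h : (6/25 : ℝ) • ((25 * lam - 1) • u) = 0 := by linear_combination (norm := module) -hkey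
    exact (smul_eq_zero.mp h).resolve_left (by norm_num)
  refine ⟨hmain, fun hne => ?_⟩
  have hu0 : u = 0 := (smul_eq_zero.mp hmain).resolve_left (by contrapose! hne; linarith)
  exact ⟨hu0, by rw [hef, hu0, smul_zero, add_zero]⟩
end

section
/- In the algebra B, the element ω := (5/6)(e₁ + e₂ + e₃) satisfies ω·x = 2x for every x ∈ B and (ω|ω) = 1; hence ω is twice the identity element of B (the conformal vector) and the corresponding central charge 2(ω|ω) equals 2. (The paper misprints the coefficient as 6/5; the correct normalization is 5/6.) -/
/-! In the product `(e₁ + e₂ + e₃) · e_j`, the two off-diagonal terms `(1/5)(e_i + e_j − e_k)` and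
`(1/5)(e_k + e_j − e_i)` add up to `(2/5) e_j`, so `e₁ + e₂ + e₃` acts as the scalar `2 + 2/5 = 12/5`;
rescaling by `5/6` gives `2`. The form contributes `3 · 2/5 + 6 · 1/25 = 36/25` on `e₁ + e₂ + e₃`,
and `(5/6)² · 36/25 = 1`. -/

section SumOfThree

variable {B : Type*} [AddCommGroup B] [Module ℝ B]

theorem mul_sum_apply (e : Fin 3 → B) (mul : B →ₗ[ℝ] B →ₗ[ℝ] B) (a b : ℝ)
    (hdiag : ∀ i, mul (e i) (e i) = a • e i)
    (hoff : ∀ i j k : Fin 3, i ≠ j → j ≠ k → i ≠ k →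
      mul (e i) (e j) = b • (e i + e j - e k)) (j : Fin 3) :
    mul (e 0 + e 1 + e 2) (e j) = (a + 2 * b) • e j := by
  have h01 := hoff 0 1 2 (by decide) (by decide) (by decide)
  have h02 := hoff 0 2 1 (by decide) (by decide) (by decide)
  have h10 := hoff 1 0 2 (by decide) (by decide) (by decide)
  have h12 := hoff 1 2 0 (by decide) (by decide) (by decide)
  have h20 := hoff 2 0 1 (by decide) (by decide) (by decide)
  have h21 := hoff 2 1 0 (by decide) (by decide) (by decide)
  match j with
  | 0 | 1 | 2 =>
    simp only [map_add, LinearMap.add_apply, hdiag, h01, h02, h10, h12, h20, h21]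
    module

theorem mul_sum_basis (e : Module.Basis (Fin 3) ℝ B) (mul : B →ₗ[ℝ] B →ₗ[ℝ] B) (a b : ℝ)
    (hdiag : ∀ i, mul (e i) (e i) = a • e i)
    (hoff : ∀ i j k : Fin 3, i ≠ j → j ≠ k → i ≠ k →
      mul (e i) (e j) = b • (e i + e j - e k)) :
    mul (e 0 + e 1 + e 2) = (a + 2 * b) • LinearMap.id :=
  e.ext fun j => mul_sum_apply e mul a b hdiag hoff j

theorem bilin_sum_self (e : Fin 3 → B) (bf : B →ₗ[ℝ] B →ₗ[ℝ] ℝ) (α β : ℝ)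
    (hbd : ∀ i, bf (e i) (e i) = α) (hbo : ∀ i j, i ≠ j → bf (e i) (e j) = β) :
    bf (e 0 + e 1 + e 2) (e 0 + e 1 + e 2) = 3 * α + 6 * β := by
  simp only [map_add, LinearMap.add_apply, hbd, hbo 0 1 (by decide), hbo 0 2 (by decide),
    hbo 1 0 (by decide), hbo 1 2 (by decide), hbo 2 0 (by decide), hbo 2 1 (by decide)]
  ring

end SumOfThree

theorem stmt_5_general {B : Type*} [AddCommGroup B] [Module ℝ B]
    (mul : B →ₗ[ℝ] B →ₗ[ℝ] B) (bf : B →ₗ[ℝ] B →ₗ[ℝ] ℝ)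
    (e : Module.Basis (Fin 3) ℝ B)
    (hdiag : ∀ i, mul (e i) (e i) = (2 : ℝ) • e i)
    (hoff : ∀ i j k : Fin 3, i ≠ j → j ≠ k → i ≠ k →
      mul (e i) (e j) = (1/5 : ℝ) • (e i + e j - e k))
    (hbd : ∀ i, bf (e i) (e i) = 2/5)
    (hbo : ∀ i j, i ≠ j → bf (e i) (e j) = 1/25) :
    (∀ x : B, mul ((5/6 : ℝ) • (e 0 + e 1 + e 2)) x = (2 : ℝ) • x) ∧
    bf ((5/6 : ℝ) • (e 0 + e 1 + e 2)) ((5/6 : ℝ) • (e 0 + e 1 + e 2)) = 1 ∧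
    2 * bf ((5/6 : ℝ) • (e 0 + e 1 + e 2)) ((5/6 : ℝ) • (e 0 + e 1 + e 2)) = 2 := by
  have hω : ∀ x : B, mul ((5/6 : ℝ) • (e 0 + e 1 + e 2)) x = (2 : ℝ) • x := fun x => by
    rw [map_smul, mul_sum_basis e mul _ _ hdiag hoff]
    simp only [LinearMap.smul_apply, LinearMap.id_apply, smul_smul]
    norm_num
  have hωω : bf ((5/6 : ℝ) • (e 0 + e 1 + e 2)) ((5/6 : ℝ) • (e 0 + e 1 + e 2)) = 1 := by
    simp only [map_smul, LinearMap.smul_apply, bilin_sum_self e bf _ _ hbd hbo, smul_eq_mul]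
    norm_num
  exact ⟨hω, hωω, by rw [hωω]; norm_num⟩

/-- In the 3-dimensional Griess algebra `B` with basis `e₁,e₂,e₃`,
products `eᵢ·eᵢ = 2eᵢ`, `eᵢ·eⱼ = (1/5)(eᵢ+eⱼ−e_k)` for `{i,j,k} = {1,2,3}`,
and form `(eᵢ|eᵢ) = 2/5`, `(eᵢ|eⱼ) = 1/25` (`i ≠ j`), the element
`ω = (5/6)(e₁+e₂+e₃)` satisfies `ω·x = 2x` for all `x` and `(ω|ω) = 1`;
hence the central charge `2(ω|ω)` equals `2`. -/
theorem stmt_5 {B : Type*} [AddCommGroup B] [Module ℝ B]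
    (mul : B →ₗ[ℝ] B →ₗ[ℝ] B) (bf : B →ₗ[ℝ] B →ₗ[ℝ] ℝ)
    (hcomm : ∀ x y, mul x y = mul y x)
    (hsymm : ∀ x y, bf x y = bf y x)
    (e : Module.Basis (Fin 3) ℝ B)
    (hdiag : ∀ i, mul (e i) (e i) = (2 : ℝ) • e i)
    (hoff : ∀ i j k : Fin 3, i ≠ j → j ≠ k → i ≠ k →
      mul (e i) (e j) = (1/5 : ℝ) • (e i + e j - e k))
    (hbd : ∀ i, bf (e i) (e i) = 2/5)
    (hbo : ∀ i j, i ≠ j → bf (e i) (e j) = 1/25) :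
    (∀ x : B, mul ((5/6 : ℝ) • (e 0 + e 1 + e 2)) x = (2 : ℝ) • x) ∧
    bf ((5/6 : ℝ) • (e 0 + e 1 + e 2)) ((5/6 : ℝ) • (e 0 + e 1 + e 2)) = 1 ∧
    2 * bf ((5/6 : ℝ) • (e 0 + e 1 + e 2)) ((5/6 : ℝ) • (e 0 + e 1 + e 2)) = 2 :=
  stmt_5_general mul bf e hdiag hoff hbd hbo
end

section
/- In the algebra B with conformal vector ω = (5/6)(e₁ + e₂ + e₃), the element η := ω − e₁ satisfies η·η = 2η and (η|η) = 3/5, so η is a Virasoro vector of central charge 6/5; moreover b := e₂ − e₃ satisfies e₁·b = (2/5)b and η·b = (8/5)b, so b is a common eigenvector of e₁ and η with eigenvalue pair (2/5, 8/5). -/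
/-!
Put `ω = (5/6)(e₁ + e₂ + e₃)`. Each `eᵢ` satisfies `eᵢ·(e₁ + e₂ + e₃) = (12/5) eᵢ`, because the two
off-diagonal products contribute `(2/5) eᵢ` and cancel in the other directions; so `ω` acts as `2`
on the basis, hence on all of `B`. Then `η·η = ω·ω − 2 ω·e₁ + e₁·e₁ = 2ω − 2e₁ = 2η` and
`η·b = ω·b − e₁·b = 2b − (2/5)b`. Similarly `(eᵢ|e₁ + e₂ + e₃) = 12/25`, whence `(ω|ω) = 1`,
`(ω|e₁) = 2/5` and `(η|η) = 1 − 4/5 + 2/5`.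
-/

section GriessAlgebra

variable {K M : Type*} [Field K] [CharZero K] [AddCommGroup M] [Module K M]
  {mul : M →ₗ[K] M →ₗ[K] M} {bf : M →ₗ[K] M →ₗ[K] K} {v : Fin 3 → M}

theorem mul_basis_sum (hdiag : ∀ i, mul (v i) (v i) = (2 : K) • v i)
    (hoff : ∀ i j k : Fin 3, i ≠ j → j ≠ k → i ≠ k →
      mul (v i) (v j) = (1/5 : K) • (v i + v j - v k)) (i : Fin 3) :
    mul (v i) (v 0 + v 1 + v 2) = (12/5 : K) • v i ∧
      mul (v 0 + v 1 + v 2) (v i) = (12/5 : K) • v i := by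
  have h01 := hoff 0 1 2 (by decide) (by decide) (by decide)
  have h02 := hoff 0 2 1 (by decide) (by decide) (by decide)
  have h10 := hoff 1 0 2 (by decide) (by decide) (by decide)
  have h12 := hoff 1 2 0 (by decide) (by decide) (by decide)
  have h20 := hoff 2 0 1 (by decide) (by decide) (by decide)
  have h21 := hoff 2 1 0 (by decide) (by decide) (by decide)
  fin_cases i <;> constructor <;>
    simp only [Fin.zero_eta, Fin.mk_one, Fin.reduceFinMk, map_add, LinearMap.add_apply, hdiag,
      h01, h02, h10, h12, h20, h21] <;> module

theorem mul_conformal_left (e : Module.Basis (Fin 3) K M)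
    (hdiag : ∀ i, mul (e i) (e i) = (2 : K) • e i)
    (hoff : ∀ i j k : Fin 3, i ≠ j → j ≠ k → i ≠ k →
      mul (e i) (e j) = (1/5 : K) • (e i + e j - e k)) (x : M) :
    mul ((5/6 : K) • (e 0 + e 1 + e 2)) x = (2 : K) • x := by
  suffices mul ((5/6 : K) • (e 0 + e 1 + e 2)) = (2 : K) • LinearMap.id from
    LinearMap.congr_fun this x
  refine e.ext fun i => ?_
  rw [map_smul, LinearMap.smul_apply, (mul_basis_sum hdiag hoff i).2]
  simp only [LinearMap.smul_apply, LinearMap.id_apply, smul_smul]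
  norm_num

theorem mul_conformal_right (e : Module.Basis (Fin 3) K M)
    (hdiag : ∀ i, mul (e i) (e i) = (2 : K) • e i)
    (hoff : ∀ i j k : Fin 3, i ≠ j → j ≠ k → i ≠ k →
      mul (e i) (e j) = (1/5 : K) • (e i + e j - e k)) (x : M) :
    mul x ((5/6 : K) • (e 0 + e 1 + e 2)) = (2 : K) • x := by
  suffices mul.flip ((5/6 : K) • (e 0 + e 1 + e 2)) = (2 : K) • LinearMap.id from
    LinearMap.congr_fun this x
  refine e.ext fun i => ?_
  rw [map_smul, LinearMap.smul_apply, LinearMap.flip_apply,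
    (mul_basis_sum hdiag hoff i).1]
  simp only [LinearMap.smul_apply, LinearMap.id_apply, smul_smul]
  norm_num

theorem bf_basis_sum (hbd : ∀ i, bf (v i) (v i) = 2/5)
    (hbo : ∀ i j, i ≠ j → bf (v i) (v j) = 1/25) (i : Fin 3) :
    bf (v i) (v 0 + v 1 + v 2) = 12/25 ∧ bf (v 0 + v 1 + v 2) (v i) = 12/25 := by
  have h01 := hbo 0 1 (by decide)
  have h02 := hbo 0 2 (by decide)
  have h10 := hbo 1 0 (by decide)
  have h12 := hbo 1 2 (by decide)
  have h20 := hbo 2 0 (by decide)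
  have h21 := hbo 2 1 (by decide)
  fin_cases i <;> constructor <;>
    simp only [Fin.zero_eta, Fin.mk_one, Fin.reduceFinMk, map_add, LinearMap.add_apply, hbd,
      h01, h02, h10, h12, h20, h21] <;> norm_num

theorem bf_conformal_basis (hbd : ∀ i, bf (v i) (v i) = 2/5)
    (hbo : ∀ i j, i ≠ j → bf (v i) (v j) = 1/25) (i : Fin 3) :
    bf ((5/6 : K) • (v 0 + v 1 + v 2)) (v i) = 2/5 ∧
      bf (v i) ((5/6 : K) • (v 0 + v 1 + v 2)) = 2/5 := by
  obtain ⟨hr, hl⟩ := bf_basis_sum hbd hbo i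
  simp only [map_smul, LinearMap.smul_apply, smul_eq_mul, hr, hl]
  norm_num

theorem bf_conformal_self (hbd : ∀ i, bf (v i) (v i) = 2/5)
    (hbo : ∀ i j, i ≠ j → bf (v i) (v j) = 1/25) :
    bf ((5/6 : K) • (v 0 + v 1 + v 2)) ((5/6 : K) • (v 0 + v 1 + v 2)) = 1 := by
  have h := fun i => (bf_conformal_basis hbd hbo i).1
  rw [map_smul (bf _), map_add (bf _), map_add (bf _), smul_eq_mul, h 0, h 1, h 2]
  norm_num

end GriessAlgebra

theorem stmt_6_general {B : Type*} [AddCommGroup B] [Module ℝ B]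
    (mul : B →ₗ[ℝ] B →ₗ[ℝ] B) (bf : B →ₗ[ℝ] B →ₗ[ℝ] ℝ)
    (e : Module.Basis (Fin 3) ℝ B)
    (hdiag : ∀ i, mul (e i) (e i) = (2 : ℝ) • e i)
    (hoff : ∀ i j k : Fin 3, i ≠ j → j ≠ k → i ≠ k →
      mul (e i) (e j) = (1/5 : ℝ) • (e i + e j - e k))
    (hbd : ∀ i, bf (e i) (e i) = 2/5)
    (hbo : ∀ i j, i ≠ j → bf (e i) (e j) = 1/25) :
    mul ((5/6 : ℝ) • (e 0 + e 1 + e 2) - e 0) ((5/6 : ℝ) • (e 0 + e 1 + e 2) - e 0)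
        = (2 : ℝ) • ((5/6 : ℝ) • (e 0 + e 1 + e 2) - e 0) ∧
    bf ((5/6 : ℝ) • (e 0 + e 1 + e 2) - e 0) ((5/6 : ℝ) • (e 0 + e 1 + e 2) - e 0) = 3/5 ∧
    mul (e 0) (e 1 - e 2) = (2/5 : ℝ) • (e 1 - e 2) ∧
    mul ((5/6 : ℝ) • (e 0 + e 1 + e 2) - e 0) (e 1 - e 2) = (8/5 : ℝ) • (e 1 - e 2) := by
  have hωl := mul_conformal_left e hdiag hoff
  have hωr := mul_conformal_right e hdiag hoff
  have he₁b : mul (e 0) (e 1 - e 2) = (2/5 : ℝ) • (e 1 - e 2) := by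
    rw [map_sub, hoff 0 1 2 (by decide) (by decide) (by decide),
      hoff 0 2 1 (by decide) (by decide) (by decide)]
    module
  have hωe₁ := bf_conformal_basis hbd hbo 0
  have hωω := bf_conformal_self hbd hbo
  set ω := (5/6 : ℝ) • (e 0 + e 1 + e 2)
  refine ⟨?_, ?_, he₁b, ?_⟩
  · simp only [map_sub, LinearMap.sub_apply, hωl, hωr, hdiag]
    module
  · simp only [map_sub, LinearMap.sub_apply, hωω, hωe₁, hbd]
    norm_num
  · rw [map_sub mul, LinearMap.sub_apply, hωl, he₁b]
    module

/-- In the 3-dimensional Griess algebra `B` with basis `e₁,e₂,e₃`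
(products `eᵢ·eᵢ = 2eᵢ`, `eᵢ·eⱼ = (1/5)(eᵢ+eⱼ−e_k)`, form `(eᵢ|eᵢ) = 2/5`,
`(eᵢ|eⱼ) = 1/25`), with conformal vector `ω = (5/6)(e₁+e₂+e₃)`, the element
`η = ω − e₁` satisfies `η·η = 2η` and `(η|η) = 3/5` (so `η` is a Virasoro
vector of central charge `6/5`), and `b = e₂ − e₃` satisfies `e₁·b = (2/5)b`
and `η·b = (8/5)b`. -/
theorem stmt_6 {B : Type*} [AddCommGroup B] [Module ℝ B]
    (mul : B →ₗ[ℝ] B →ₗ[ℝ] B) (bf : B →ₗ[ℝ] B →ₗ[ℝ] ℝ)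
    (hcomm : ∀ x y, mul x y = mul y x)
    (hsymm : ∀ x y, bf x y = bf y x)
    (e : Module.Basis (Fin 3) ℝ B)
    (hdiag : ∀ i, mul (e i) (e i) = (2 : ℝ) • e i)
    (hoff : ∀ i j k : Fin 3, i ≠ j → j ≠ k → i ≠ k →
      mul (e i) (e j) = (1/5 : ℝ) • (e i + e j - e k))
    (hbd : ∀ i, bf (e i) (e i) = 2/5)
    (hbo : ∀ i j, i ≠ j → bf (e i) (e j) = 1/25) :
    mul ((5/6 : ℝ) • (e 0 + e 1 + e 2) - e 0) ((5/6 : ℝ) • (e 0 + e 1 + e 2) - e 0)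
        = (2 : ℝ) • ((5/6 : ℝ) • (e 0 + e 1 + e 2) - e 0) ∧
    bf ((5/6 : ℝ) • (e 0 + e 1 + e 2) - e 0) ((5/6 : ℝ) • (e 0 + e 1 + e 2) - e 0) = 3/5 ∧
    mul (e 0) (e 1 - e 2) = (2/5 : ℝ) • (e 1 - e 2) ∧
    mul ((5/6 : ℝ) • (e 0 + e 1 + e 2) - e 0) (e 1 - e 2) = (8/5 : ℝ) • (e 1 - e 2) :=
  stmt_6_general mul bf e hdiag hoff hbd hbo
end

section
/- In the algebra B, the element ω := (5/9)·Σ_{i,j∈ℤ/3ℤ} e_{ij} satisfies ω·x = 2x for every x ∈ B and (ω|ω) = 2; hence ω is the conformal vector and the central charge 2(ω|ω) equals 4. -/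
/-! Summing the product rule over all basis vectors, the third terms `-e_{rs}` run over all
`e_p` with `p ≠ q` once more (since `p ↦ -(p + q)` permutes them, `ℤ/3 × ℤ/3` having
exponent 3), so they cancel the first terms and `(Σ e_p)·e_q = (2 + 8/5) e_q = (18/5) e_q`.
The value of the form is a count of diagonal and off-diagonal pairs. -/

open Finset

section ExponentThree

variable {G : Type*} [AddCommGroup G] [Fintype G] [DecidableEq G]

theorem Finset.sum_erase_neg_add_eq {M : Type*} [AddCommMonoid M] {q : G} (hq : 3 • q = 0)
    (f : G → M) : ∑ p ∈ univ.erase q, f (-(p + q)) = ∑ p ∈ univ.erase q, f p := by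
  have hinv : ∀ p : G, -(-(p + q) + q) = p := fun p => by abel
  have hfix : -(q + q) = q := neg_eq_of_add_eq_zero_right (by rwa [succ_nsmul, two_nsmul] at hq)
  refine sum_nbij' (fun p => -(p + q)) (fun p => -(p + q)) ?_ ?_ (fun p _ => hinv p)
    (fun p _ => hinv p) (fun _ _ => rfl) <;>
  · intro p hp
    simp only [mem_erase, mem_univ, and_true] at hp ⊢
    contrapose! hp
    rw [← hinv p, hp, hfix]

theorem LinearMap.sum_mul_eq_smul_of_neg_add_rule {K B : Type*} [CommRing K] [AddCommGroup B] [Module K B]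
    (mul : B →ₗ[K] B →ₗ[K] B) (b : G → B) (a c : K) (hd : ∀ p, mul (b p) (b p) = a • b p)
    (hoff : ∀ p q, p ≠ q → mul (b p) (b q) = c • (b p + b q - b (-(p + q))))
    {q : G} (hq : 3 • q = 0) :
    mul (∑ p, b p) (b q) = (a + ((Fintype.card G : K) - 1) * c) • b q := by
  have hcard : ((univ.erase q).card : K) = Fintype.card G - 1 :=
    cast_card_erase_of_mem (mem_univ q)
  calc mul (∑ p, b p) (b q)
      = a • b q + ∑ p ∈ univ.erase q, c • (b p + b q - b (-(p + q))) := by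
        rw [LinearMap.map_sum₂, ← add_sum_erase _ _ (mem_univ q),
          hd, sum_congr rfl fun p hp => hoff p q (ne_of_mem_erase hp)]
    _ = a • b q + c • ((univ.erase q).card • b q) := by
        rw [← smul_sum, sum_sub_distrib, sum_add_distrib, sum_erase_neg_add_eq hq, sum_const,
          add_sub_cancel_left]
    _ = (a + ((Fintype.card G : K) - 1) * c) • b q := by
        rw [← Nat.cast_smul_eq_nsmul K, hcard]
        module

end ExponentThree

theorem LinearMap.apply_sum_sum_of_const {ι R M : Type*} [Fintype ι] [DecidableEq ι]
    [CommRing R] [AddCommMonoid M] [Module R M] (bf : M →ₗ[R] M →ₗ[R] R) (b : ι → M) (d o : R)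
    (hd : ∀ p, bf (b p) (b p) = d) (ho : ∀ p q, p ≠ q → bf (b p) (b q) = o) :
    bf (∑ p, b p) (∑ p, b p) = Fintype.card ι * (d + ((Fintype.card ι : R) - 1) * o) := by
  have hrow : ∀ p, bf (b p) (∑ q, b q) = d + ((Fintype.card ι : R) - 1) * o := fun p => by
    rw [map_sum, ← add_sum_erase _ _ (mem_univ p), hd,
      sum_congr rfl fun q hq => ho p q (ne_of_mem_erase hq).symm, sum_const, nsmul_eq_mul,
      cast_card_erase_of_mem (mem_univ p), card_univ]
  rw [LinearMap.map_sum₂, sum_congr rfl fun p _ => hrow p, sum_const,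
    card_univ, nsmul_eq_mul]

theorem stmt_8_general {B : Type*} [AddCommGroup B] [Module ℝ B]
    (mul : B →ₗ[ℝ] B →ₗ[ℝ] B) (bf : B →ₗ[ℝ] B →ₗ[ℝ] ℝ)
    (b : Module.Basis (ZMod 3 × ZMod 3) ℝ B)
    (hd : ∀ p : ZMod 3 × ZMod 3, mul (b p) (b p) = (2 : ℝ) • b p)
    (hoff : ∀ p q : ZMod 3 × ZMod 3, p ≠ q →
      mul (b p) (b q) = (1/5 : ℝ) • (b p + b q - b (-(p.1 + q.1), -(p.2 + q.2))))
    (hbd : ∀ p : ZMod 3 × ZMod 3, bf (b p) (b p) = 2/5)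
    (hbo : ∀ p q : ZMod 3 × ZMod 3, p ≠ q → bf (b p) (b q) = 1/25) :
    (∀ x : B, mul ((5/9 : ℝ) • ∑ p : ZMod 3 × ZMod 3, b p) x = (2 : ℝ) • x) ∧
    bf ((5/9 : ℝ) • ∑ p : ZMod 3 × ZMod 3, b p)
       ((5/9 : ℝ) • ∑ p : ZMod 3 × ZMod 3, b p) = 2 := by
  have hexp : ∀ q : ZMod 3 × ZMod 3, 3 • q = 0 := by decide
  have hcard : Fintype.card (ZMod 3 × ZMod 3) = 9 := rfl
  have hω : mul ((5/9 : ℝ) • ∑ p, b p) = (2 : ℝ) • LinearMap.id := b.ext fun q => by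
    rw [map_smul, LinearMap.smul_apply,
      LinearMap.sum_mul_eq_smul_of_neg_add_rule mul b 2 (1/5) hd hoff (hexp q), smul_smul, hcard]
    norm_num
  refine ⟨fun x => by rw [hω]; rfl, ?_⟩
  rw [LinearMap.map_smul₂, map_smul, LinearMap.apply_sum_sum_of_const bf b _ _ hbd hbo, hcard,
    smul_eq_mul, smul_eq_mul]
  norm_num

/-- In the 9-dimensional Griess algebra `B` with basis
`{e_{ij} : i,j ∈ ℤ/3ℤ}` (products: `e_{ij}·e_{ij} = 2e_{ij}`, and for
`(i,j) ≠ (k,l)`, `e_{ij}·e_{kl} = (1/5)(e_{ij}+e_{kl}−e_{rs})` with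
`i+k+r ≡ j+l+s ≡ 0 (mod 3)`; form: `2/5` diagonal, `1/25` off-diagonal),
the element `ω = (5/9)·Σ e_{ij}` satisfies `ω·x = 2x` for all `x` and
`(ω|ω) = 2`, so the central charge `2(ω|ω)` is `4`. -/
theorem stmt_8 {B : Type*} [AddCommGroup B] [Module ℝ B]
    (mul : B →ₗ[ℝ] B →ₗ[ℝ] B) (bf : B →ₗ[ℝ] B →ₗ[ℝ] ℝ)
    (hcomm : ∀ x y, mul x y = mul y x)
    (hsymm : ∀ x y, bf x y = bf y x)
    (b : Module.Basis (ZMod 3 × ZMod 3) ℝ B)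
    (hd : ∀ p : ZMod 3 × ZMod 3, mul (b p) (b p) = (2 : ℝ) • b p)
    (hoff : ∀ p q : ZMod 3 × ZMod 3, p ≠ q →
      mul (b p) (b q) = (1/5 : ℝ) • (b p + b q - b (-(p.1 + q.1), -(p.2 + q.2))))
    (hbd : ∀ p : ZMod 3 × ZMod 3, bf (b p) (b p) = 2/5)
    (hbo : ∀ p q : ZMod 3 × ZMod 3, p ≠ q → bf (b p) (b q) = 1/25) :
    (∀ x : B, mul ((5/9 : ℝ) • ∑ p : ZMod 3 × ZMod 3, b p) x = (2 : ℝ) • x) ∧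
    bf ((5/9 : ℝ) • ∑ p : ZMod 3 × ZMod 3, b p)
       ((5/9 : ℝ) • ∑ p : ZMod 3 × ZMod 3, b p) = 2 :=
  stmt_8_general mul bf b hd hoff hbd hbo
end

section
/- Under these hypotheses, the element ũ := (1/9)·Σ_{A∈I} e_A satisfies ũ·ũ = 2ũ and (ũ|ũ) = 28/5; that is, ũ is a Virasoro vector of central charge 2(ũ|ũ) = 56/5 (so that in V_{K₁₂}^{ν̂} the difference ω_{K₁₂} − ũ is a Virasoro vector of central charge 4/5). -/
/-!
For a fixed `A`, expanding `e_A · Σ_C e_C` over the 80 neighbours of `A` gives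
`2 e_A + (1/5)(80 e_A + Σ_C e_C - Σ_C e_{τ_A C}) = 18 e_A`, since `τ_A` only permutes the
neighbours; likewise `(e_A | Σ_C e_C) = 2/5 + 80/25 = 18/5`, because invariance and
`e_A · e_A = 2 e_A` force `(e_A | e_C) = 0` whenever `e_A · e_C = 0`. Summing over the 126
indices, `s = Σ_A e_A` satisfies `s · s = 18 s` and `(s | s) = 126 · 18/5`, and `ũ = s/9`
rescales these to `ũ · ũ = 2ũ` and `(ũ | ũ) = 28/5`.
-/

open Finset

section InvariantForm

variable {B : Type*} [AddCommGroup B] [Module ℝ B]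
  {mul : B →ₗ[ℝ] B →ₗ[ℝ] B} {bf : B →ₗ[ℝ] B →ₗ[ℝ] ℝ}

theorem bf_eq_zero_of_mul_eq_zero (hinv : ∀ x y z, bf (mul x y) z = bf x (mul y z))
    {a c : B} {t : ℝ} (ht : t ≠ 0) (ha : mul a a = t • a) (hac : mul a c = 0) :
    bf a c = 0 := by
  have h := hinv a a c
  rw [ha, hac, map_smul, map_zero, LinearMap.smul_apply, smul_eq_mul] at h
  exact (mul_eq_zero.mp h).resolve_left ht

end InvariantForm

section Neighbours

variable {B ι : Type*} [AddCommGroup B] [Module ℝ B] [Fintype ι]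
  (mul : B →ₗ[ℝ] B →ₗ[ℝ] B) (e : ι → B) (A : ι)

noncomputable def neighbours : Finset ι :=
  (Set.toFinite {C : ι | C ≠ A ∧ mul (e A) (e C) ≠ 0}).toFinset

variable {mul e A}

theorem mem_neighbours {C : ι} : C ∈ neighbours mul e A ↔ C ≠ A ∧ mul (e A) (e C) ≠ 0 :=
  Set.Finite.mem_toFinset _

theorem coe_neighbours :
    (neighbours mul e A : Set ι) = {C : ι | C ≠ A ∧ mul (e A) (e C) ≠ 0} :=
  Set.Finite.coe_toFinset _

theorem card_neighbours :
    #(neighbours mul e A) = Set.ncard {C : ι | C ≠ A ∧ mul (e A) (e C) ≠ 0} :=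
  (Set.ncard_eq_toFinset_card _ _).symm

theorem sum_eq_add_sum_neighbours [DecidableEq ι] {M : Type*} [AddCommMonoid M] (f : ι → M)
    (hf : ∀ C, C ≠ A → mul (e A) (e C) = 0 → f C = 0) :
    ∑ C, f C = f A + ∑ C ∈ neighbours mul e A, f C := by
  rw [← add_sum_erase univ f (mem_univ A)]
  congr 1
  refine (sum_subset (fun C hC => ?_) fun C hC hCN => ?_).symm
  · exact mem_erase.mpr ⟨(mem_neighbours.mp hC).1, mem_univ C⟩
  · have hCA := (mem_erase.mp hC).1
    exact hf C hCA (not_not.mp fun h => hCN (mem_neighbours.mpr ⟨hCA, h⟩))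

theorem sum_mul_family_eq (τ : ι → ι) (hA : mul (e A) (e A) = (2 : ℝ) • e A)
    (hτ : Set.BijOn τ (neighbours mul e A) (neighbours mul e A))
    (hmul : ∀ C ∈ neighbours mul e A,
      mul (e A) (e C) = (1/5 : ℝ) • (e A + e C - e (τ C))) :
    ∑ C, mul (e A) (e C) = (2 + #(neighbours mul e A) / 5 : ℝ) • e A := by
  classical
  set N := neighbours mul e A
  have hperm : ∑ C ∈ N, e (τ C) = ∑ C ∈ N, e C :=
    sum_nbij τ hτ.mapsTo hτ.injOn hτ.surjOn fun _ _ => rfl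
  rw [sum_eq_add_sum_neighbours _ fun _ _ h => h, hA, sum_congr rfl hmul, ← smul_sum,
    sum_sub_distrib, sum_add_distrib, hperm, add_sub_cancel_right, sum_const,
    ← Nat.cast_smul_eq_nsmul ℝ, smul_smul, ← add_smul]
  ring_nf

theorem sum_bf_family_eq {bf : B →ₗ[ℝ] B →ₗ[ℝ] ℝ}
    (hinv : ∀ x y z, bf (mul x y) z = bf x (mul y z))
    (hA : mul (e A) (e A) = (2 : ℝ) • e A) (hbA : bf (e A) (e A) = 2/5)
    (hbf : ∀ C ∈ neighbours mul e A, bf (e A) (e C) = 1/25) :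
    ∑ C, bf (e A) (e C) = 2/5 + #(neighbours mul e A) / 25 := by
  classical
  have hzero : ∀ C, C ≠ A → mul (e A) (e C) = 0 → bf (e A) (e C) = 0 :=
    fun _ _ => bf_eq_zero_of_mul_eq_zero hinv two_ne_zero hA
  rw [sum_eq_add_sum_neighbours _ hzero, hbA, sum_congr rfl hbf, sum_const, nsmul_eq_mul]
  ring

end Neighbours

theorem stmt_9_general {B : Type*} [AddCommGroup B] [Module ℝ B]
    (mul : B →ₗ[ℝ] B →ₗ[ℝ] B) (bf : B →ₗ[ℝ] B →ₗ[ℝ] ℝ)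
    (hinv : ∀ x y z, bf (mul x y) z = bf x (mul y z))
    (ι : Type*) [Fintype ι] (hcard : Fintype.card ι = 126)
    (e : ι → B)
    (hd : ∀ A, mul (e A) (e A) = (2 : ℝ) • e A)
    (hbd : ∀ A, bf (e A) (e A) = 2/5)
    (τ : ι → ι → ι)
    (hτ : ∀ A : ι, Set.BijOn (τ A)
      {C : ι | C ≠ A ∧ mul (e A) (e C) ≠ 0} {C : ι | C ≠ A ∧ mul (e A) (e C) ≠ 0})
    (hN : ∀ A : ι, Set.ncard {C : ι | C ≠ A ∧ mul (e A) (e C) ≠ 0} = 80)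
    (hoff : ∀ A C : ι, A ≠ C →
      (mul (e A) (e C) = 0 ∧ bf (e A) (e C) = 0) ∨
      (bf (e A) (e C) = 1/25 ∧
        mul (e A) (e C) = (1/5 : ℝ) • (e A + e C - e (τ A C)))) :
    mul ((1/9 : ℝ) • ∑ A, e A) ((1/9 : ℝ) • ∑ A, e A)
        = (2 : ℝ) • ((1/9 : ℝ) • ∑ A, e A) ∧
    bf ((1/9 : ℝ) • ∑ A, e A) ((1/9 : ℝ) • ∑ A, e A) = 28/5 := by
  have hcardN : ∀ A, (#(neighbours mul e A) : ℝ) = 80 := fun A => by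
    rw [card_neighbours, hN]; norm_num
  have hrel : ∀ A, ∀ C ∈ neighbours mul e A, bf (e A) (e C) = 1/25 ∧
      mul (e A) (e C) = (1/5 : ℝ) • (e A + e C - e (τ A C)) := fun A C hC => by
    obtain ⟨hCA, hne⟩ := mem_neighbours.mp hC
    exact (hoff A C (Ne.symm hCA)).resolve_left fun h => hne h.1
  have hperm : ∀ A, Set.BijOn (τ A) (neighbours mul e A) (neighbours mul e A) := fun A => by
    rw [coe_neighbours]; exact hτ A
  have hmul : mul (∑ A, e A) (∑ C, e C) = (18 : ℝ) • ∑ A, e A := by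
    simp_rw [LinearMap.map_sum₂, map_sum, smul_sum]
    refine sum_congr rfl fun A _ => ?_
    rw [sum_mul_family_eq (τ A) (hd A) (hperm A) fun C hC => (hrel A C hC).2, hcardN]
    norm_num
  have hbf : bf (∑ A, e A) (∑ C, e C) = 126 * (18/5) := by
    simp_rw [LinearMap.map_sum₂, map_sum]
    rw [sum_congr rfl fun A _ => sum_bf_family_eq hinv (hd A) (hbd A) fun C hC => (hrel A C hC).1,
      sum_congr rfl fun A _ => by rw [hcardN], sum_const, card_univ, hcard]
    norm_num
  refine ⟨?_, ?_⟩
  · simp only [map_smul, LinearMap.smul_apply, hmul, smul_smul]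
    norm_num
  · simp only [map_smul, LinearMap.smul_apply, hbf, smul_eq_mul]
    norm_num

/-- Given a family of 126 distinct idempotent-like elements `e_A`
in an invariant-form commutative algebra (modelling the `c = 4/5` Virasoro
vectors attached to the ν-invariant `√2A₂`-sublattices of the Coxeter–Todd
lattice `K₁₂`), with `e_A·e_A = 2e_A`, `(e_A|e_A) = 2/5`, every `e_A` having
exactly 80 "neighbours" permuted by `τ_A`, and the stated two-point relations,
the element `ũ = (1/9)Σ_A e_A` satisfies `ũ·ũ = 2ũ` and `(ũ|ũ) = 28/5`,
i.e. `ũ` is a Virasoro vector of central charge `56/5`. -/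
theorem stmt_9 {B : Type*} [AddCommGroup B] [Module ℝ B]
    (mul : B →ₗ[ℝ] B →ₗ[ℝ] B) (bf : B →ₗ[ℝ] B →ₗ[ℝ] ℝ)
    (hcomm : ∀ x y, mul x y = mul y x)
    (hsymm : ∀ x y, bf x y = bf y x)
    (hinv : ∀ x y z, bf (mul x y) z = bf x (mul y z))
    (ι : Type*) [Fintype ι] (hcard : Fintype.card ι = 126)
    (e : ι → B) (hinj : Function.Injective e)
    (hd : ∀ A, mul (e A) (e A) = (2 : ℝ) • e A)
    (hbd : ∀ A, bf (e A) (e A) = 2/5)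
    (τ : ι → ι → ι)
    (hτ : ∀ A : ι, Set.BijOn (τ A)
      {C : ι | C ≠ A ∧ mul (e A) (e C) ≠ 0} {C : ι | C ≠ A ∧ mul (e A) (e C) ≠ 0})
    (hN : ∀ A : ι, Set.ncard {C : ι | C ≠ A ∧ mul (e A) (e C) ≠ 0} = 80)
    (hoff : ∀ A C : ι, A ≠ C →
      (mul (e A) (e C) = 0 ∧ bf (e A) (e C) = 0) ∨
      (bf (e A) (e C) = 1/25 ∧
        mul (e A) (e C) = (1/5 : ℝ) • (e A + e C - e (τ A C)))) :
    mul ((1/9 : ℝ) • ∑ A, e A) ((1/9 : ℝ) • ∑ A, e A)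
        = (2 : ℝ) • ((1/9 : ℝ) • ∑ A, e A) ∧
    bf ((1/9 : ℝ) • ∑ A, e A) ((1/9 : ℝ) • ∑ A, e A) = 28/5 :=
  stmt_9_general mul bf hinv ι hcard e hd hbd τ hτ hN hoff
end

section
/- P(A₂⊗R) = ((1−ν)A₂)⊗R + A₂⊗R₃ as submodules of A₂⊗R. -/
open TensorProduct

/-!
A tensor `a ⊗ r` pairs into `3ℤ` as soon as `a ∈ (1 - ν)A₂ = 3A₂*` or `r ∈ R₃`, which gives `⊇`.
Conversely write `x = e₁ ⊗ r₁ + e₂ ⊗ r₂`. Pairing with `e₁ ⊗ δ` gives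
`2 B_R(r₁, δ) - B_R(r₂, δ) ≡ 0`, i.e. `r₁ + r₂ ∈ R₃`, and then
`x = (1 - ν)e₁ ⊗ r₁ + e₂ ⊗ (r₁ + r₂)` since `(1 - ν)e₁ = e₁ - e₂`.
-/

/-- The bilinear form of the `A₂` root lattice realized on `ℤ²` with Gram
matrix `[[2,−1],[−1,2]]`. -/
def B2 (v w : ℤ × ℤ) : ℤ :=
  2 * v.1 * w.1 - v.1 * w.2 - v.2 * w.1 + 2 * v.2 * w.2

/-- The order-3 isometry `ν(x,y) = (−y, x−y)` of the `A₂` lattice. -/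
def nuA2 : (ℤ × ℤ) →ₗ[ℤ] (ℤ × ℤ) where
  toFun p := (-p.2, p.1 - p.2)
  map_add' p q := by ext <;> dsimp <;> ring
  map_smul' c p := by ext <;> dsimp <;> ring

/-- For `n = 3` and `B` the product form this is `P(A₂ ⊗ R)`. -/
def dvdPairingSubmodule {M N : Type*} [AddCommGroup M] [Module ℤ M] [AddCommGroup N]
    [Module ℤ N] (B : M →ₗ[ℤ] N →ₗ[ℤ] ℤ) (n : ℤ) : Submodule ℤ M where
  carrier := {x | ∀ y, n ∣ B x y}
  zero_mem' _ := by simp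
  add_mem' hx hy y := by simpa using dvd_add (hx y) (hy y)
  smul_mem' c _ hx y := by simpa using (hx y).mul_left c

section ProductForm

variable {M R : Type*} [AddCommGroup M] [Module ℤ M] [AddCommGroup R] [Module ℤ R]

theorem tmul_mem_dvdPairingSubmodule (BM : M → M → ℤ) (BR : R → R → ℤ)
    {Bt : (M ⊗[ℤ] R) →ₗ[ℤ] (M ⊗[ℤ] R) →ₗ[ℤ] ℤ}
    (hBt : ∀ a a' r r', Bt (a ⊗ₜ r) (a' ⊗ₜ r') = BM a a' * BR r r')
    {n : ℤ} {a : M} {r : R} (h : (∀ a', n ∣ BM a a') ∨ ∀ r', n ∣ BR r r') :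
    a ⊗ₜ r ∈ dvdPairingSubmodule Bt n := by
  intro y
  induction y using TensorProduct.induction_on with
  | zero => simp
  | tmul a' r' =>
    rw [hBt]
    rcases h with h | h
    · exact (h a').mul_right _
    · exact (h r').mul_left _
  | add u v hu hv => simpa using dvd_add hu hv

end ProductForm

section A2

variable {R : Type*} [AddCommGroup R] [Module ℤ R]

theorem three_dvd_B2_sub_nuA2 (p q : ℤ × ℤ) :
    (3 : ℤ) ∣ B2 ((LinearMap.id - nuA2 : (ℤ × ℤ) →ₗ[ℤ] (ℤ × ℤ)) p) q :=
  ⟨p.1 * q.1 + (p.2 - p.1) * q.2, by simp [nuA2, B2]; ring⟩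

theorem exists_eq_tmul_add_tmul (x : (ℤ × ℤ) ⊗[ℤ] R) :
    ∃ r₁ r₂ : R, x = ((1, 0) : ℤ × ℤ) ⊗ₜ r₁ + ((0, 1) : ℤ × ℤ) ⊗ₜ r₂ := by
  induction x using TensorProduct.induction_on with
  | zero => exact ⟨0, 0, by simp⟩
  | tmul a r =>
    have ha : a = a.1 • ((1, 0) : ℤ × ℤ) + a.2 • ((0, 1) : ℤ × ℤ) := by ext <;> simp
    have hs (n : ℤ) (e : ℤ × ℤ) : (n • e) ⊗ₜ[ℤ] r = e ⊗ₜ (n • r) :=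
      (map_zsmul ((mk ℤ _ R).flip r) n e).trans (map_zsmul (mk ℤ _ R e) n r).symm
    rw [ha, add_tmul, hs, hs]
    exact ⟨_, _, rfl⟩
  | add x y hx hy =>
    obtain ⟨r₁, r₂, rfl⟩ := hx
    obtain ⟨s₁, s₂, rfl⟩ := hy
    exact ⟨r₁ + s₁, r₂ + s₂, by simp only [tmul_add]; abel⟩

theorem three_dvd_add_of_mem_dvdPairingSubmodule {BR : R →ₗ[ℤ] R →ₗ[ℤ] ℤ}
    {Bt : ((ℤ × ℤ) ⊗[ℤ] R) →ₗ[ℤ] ((ℤ × ℤ) ⊗[ℤ] R) →ₗ[ℤ] ℤ}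
    (hBt : ∀ a a' r r', Bt (a ⊗ₜ r) (a' ⊗ₜ r') = B2 a a' * BR r r') {r₁ r₂ : R}
    (hx : ((1, 0) : ℤ × ℤ) ⊗ₜ r₁ + ((0, 1) : ℤ × ℤ) ⊗ₜ r₂ ∈ dvdPairingSubmodule Bt 3)
    (δ : R) : (3 : ℤ) ∣ BR (r₁ + r₂) δ := by
  have h := hx (((1, 0) : ℤ × ℤ) ⊗ₜ δ)
  simp only [map_add, LinearMap.add_apply, hBt, B2] at h ⊢
  omega

end A2

theorem stmt_13_general (R : Type*) [AddCommGroup R] [Module ℤ R]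
    (BR : R →ₗ[ℤ] R →ₗ[ℤ] ℤ)
    (Bt : ((ℤ × ℤ) ⊗[ℤ] R) →ₗ[ℤ] ((ℤ × ℤ) ⊗[ℤ] R) →ₗ[ℤ] ℤ)
    (hBt : ∀ (a a' : ℤ × ℤ) (r r' : R),
      Bt (a ⊗ₜ[ℤ] r) (a' ⊗ₜ[ℤ] r') = B2 a a' * BR r r') :
    {x : (ℤ × ℤ) ⊗[ℤ] R | ∀ y, (3 : ℤ) ∣ Bt x y} =
      ↑(Submodule.span ℤ {z : (ℤ × ℤ) ⊗[ℤ] R |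
            ∃ a ∈ LinearMap.range (LinearMap.id - nuA2), ∃ r : R, z = a ⊗ₜ[ℤ] r} ⊔
        Submodule.span ℤ {z : (ℤ × ℤ) ⊗[ℤ] R |
            ∃ a : ℤ × ℤ, ∃ r : R, (∀ δ : R, (3 : ℤ) ∣ BR r δ) ∧ z = a ⊗ₜ[ℤ] r}) := by
  ext x
  refine ⟨fun hx => ?_, fun hx => ?_⟩
  · obtain ⟨r₁, r₂, rfl⟩ := exists_eq_tmul_add_tmul x
    have hr := three_dvd_add_of_mem_dvdPairingSubmodule hBt hx
    have hν : (LinearMap.id - nuA2 : (ℤ × ℤ) →ₗ[ℤ] (ℤ × ℤ)) (1, 0) = (1, 0) - (0, 1) := by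
      simp [nuA2]
    refine Submodule.mem_sup.2 ⟨_, Submodule.subset_span ⟨_, ⟨(1, 0), rfl⟩, r₁, rfl⟩,
      _, Submodule.subset_span ⟨(0, 1), r₁ + r₂, hr, rfl⟩, ?_⟩
    rw [hν, sub_tmul, tmul_add]
    abel
  · refine (sup_le (Submodule.span_le.2 ?_) (Submodule.span_le.2 ?_) :
      _ ≤ dvdPairingSubmodule Bt 3) hx
    · rintro _ ⟨_, ⟨p, rfl⟩, r, rfl⟩
      exact tmul_mem_dvdPairingSubmodule B2 (BR · ·) hBt (.inl (three_dvd_B2_sub_nuA2 p))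
    · rintro _ ⟨a, r, hr, rfl⟩
      exact tmul_mem_dvdPairingSubmodule B2 (BR · ·) hBt (.inr hr)

/-- for the product form `B` on `A₂⊗R` (determined by
`B(a⊗r, a'⊗r') = B₂(a,a')·B_R(r,r')`), one has
`P(A₂⊗R) = ((1−ν)A₂)⊗R + A₂⊗R₃`, where
`P(A₂⊗R) = {x : B(x, A₂⊗R) ⊆ 3ℤ}` and `R₃ = {γ ∈ R : B_R(γ,R) ⊆ 3ℤ}`. -/
theorem stmt_13 (R : Type*) [AddCommGroup R] [Module ℤ R]
    (BR : R →ₗ[ℤ] R →ₗ[ℤ] ℤ)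
    (hBRsymm : ∀ x y, BR x y = BR y x)
    (Bt : ((ℤ × ℤ) ⊗[ℤ] R) →ₗ[ℤ] ((ℤ × ℤ) ⊗[ℤ] R) →ₗ[ℤ] ℤ)
    (hBt : ∀ (a a' : ℤ × ℤ) (r r' : R),
      Bt (a ⊗ₜ[ℤ] r) (a' ⊗ₜ[ℤ] r') = B2 a a' * BR r r') :
    {x : (ℤ × ℤ) ⊗[ℤ] R | ∀ y, (3 : ℤ) ∣ Bt x y} =
      ↑(Submodule.span ℤ {z : (ℤ × ℤ) ⊗[ℤ] R |
            ∃ a ∈ LinearMap.range (LinearMap.id - nuA2), ∃ r : R, z = a ⊗ₜ[ℤ] r} ⊔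
        Submodule.span ℤ {z : (ℤ × ℤ) ⊗[ℤ] R |
            ∃ a : ℤ × ℤ, ∃ r : R, (∀ δ : R, (3 : ℤ) ∣ BR r δ) ∧ z = a ⊗ₜ[ℤ] r}) :=
  stmt_13_general R BR Bt hBt
end

section
/- Let β ∈ R satisfy B_R(β,β) = 2, set M = A₂⊗ℤβ inside A₂⊗R, and let Ann(M) = {x ∈ A₂⊗R : B(x,m) = 0 for all m ∈ M}. Then: (a) 2(A₂⊗R) ⊆ M + Ann(M), i.e. M is an RSSD sublattice of A₂⊗R; and (b) the map id_{A₂}⊗r_β sends every element of M to its negative and fixes every element of Ann(M) pointwise; hence id_{A₂}⊗r_β coincides with the RSSD involution t_M of A₂⊗R, which acts as −1 on M and +1 on Ann(M). -/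
open TensorProduct

/-- The annihilator `Ann(N) = {x : Bt(x, N) = 0}` of a submodule `N` with
respect to a bilinear form `Bt`. -/
def annih {M : Type*} [AddCommGroup M] [Module ℤ M]
    (Bt : M →ₗ[ℤ] M →ₗ[ℤ] ℤ) (N : Submodule ℤ M) : Submodule ℤ M where
  carrier := {x | ∀ m ∈ N, Bt x m = 0}
  add_mem' := by
    intro a b ha hb m hm
    rw [map_add, LinearMap.add_apply, ha m hm, hb m hm, add_zero]
  zero_mem' := by intro m hm; simp
  smul_mem' := by
    intro c x hx m hm
    simp [hx m hm]

/-- The sublattice `M = A₂ ⊗ ℤβ` of `A₂ ⊗ R`. -/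
def A2beta (R : Type*) [AddCommGroup R] [Module ℤ R] (β : R) :
    Submodule ℤ ((ℤ × ℤ) ⊗[ℤ] R) :=
  Submodule.span ℤ {z : (ℤ × ℤ) ⊗[ℤ] R | ∃ a : ℤ × ℤ, z = a ⊗ₜ[ℤ] β}

/-!
Write `φ : A₂ ⊗ R → A₂` for the contraction `a ⊗ r ↦ B_R(β, r) a`. Then `id ⊗ r_β = 1 - φ(·) ⊗ β`
and, by symmetry of `B_R`, `B(x, a ⊗ β) = B₂(φ x, a)`. Since `φ(a ⊗ β) = 2a`, the map `id ⊗ r_β`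
negates `M = A₂ ⊗ β`; since `B₂` is nondegenerate, `φ` vanishes on `Ann(M)`, where `id ⊗ r_β` is
therefore the identity; and `2x = φ(x) ⊗ β + (2x - φ(x) ⊗ β)` splits `2x` along `M + Ann(M)`.
-/

section ProductForm

variable {K A R : Type*} [CommRing K] [AddCommGroup A] [Module K A] [AddCommGroup R] [Module K R]

theorem LinearMap.lTensor_smulRight_apply (f : R →ₗ[K] K) (v : R) (x : A ⊗[K] R) :
    (f.smulRight v).lTensor A x = TensorProduct.rid K A (f.lTensor A x) ⊗ₜ v := by
  induction x using TensorProduct.induction_on with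
  | zero => simp
  | tmul a r => simp [TensorProduct.smul_tmul]
  | add x y hx hy => simp only [map_add, hx, hy, add_tmul]

theorem TensorProduct.productForm_apply_tmul_right (BA : A →ₗ[K] A →ₗ[K] K)
    (BR : R →ₗ[K] R →ₗ[K] K) (Bt : A ⊗[K] R →ₗ[K] A ⊗[K] R →ₗ[K] K)
    (hBt : ∀ a a' r r', Bt (a ⊗ₜ r) (a' ⊗ₜ r') = BA a a' * BR r r')
    (x : A ⊗[K] R) (a' : A) (r' : R) :
    Bt x (a' ⊗ₜ r') = BA (TensorProduct.rid K A (BR.flip r' |>.lTensor A x)) a' := by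
  induction x using TensorProduct.induction_on with
  | zero => simp
  | tmul a r => simp [hBt, mul_comm]
  | add x y hx hy => simp only [map_add, LinearMap.add_apply, hx, hy]

end ProductForm

def B2Bilin : (ℤ × ℤ) →ₗ[ℤ] (ℤ × ℤ) →ₗ[ℤ] ℤ :=
  LinearMap.mk₂ ℤ B2 (by intros; simp only [B2, Prod.fst_add, Prod.snd_add]; ring)
    (by intros; simp only [B2, Prod.smul_fst, Prod.smul_snd, smul_eq_mul]; ring)
    (by intros; simp only [B2, Prod.fst_add, Prod.snd_add]; ring)
    (by intros; simp only [B2, Prod.smul_fst, Prod.smul_snd, smul_eq_mul]; ring)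

theorem eq_zero_of_B2_eq_zero {v : ℤ × ℤ} (hv : ∀ w, B2 v w = 0) : v = 0 := by
  have h₁ := hv (1, 0)
  have h₂ := hv (0, 1)
  simp only [B2] at h₁ h₂
  ext <;> simp <;> omega

theorem mem_A2beta_iff {R : Type*} [AddCommGroup R] [Module ℤ R] {β : R}
    {x : (ℤ × ℤ) ⊗[ℤ] R} :
    x ∈ A2beta R β ↔ ∃ a : ℤ × ℤ, x = a ⊗ₜ β := by
  refine ⟨fun hx => ?_, fun hx => Submodule.subset_span hx⟩
  induction hx using Submodule.span_induction with
  | mem z hz => exact hz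
  | zero => exact ⟨0, (zero_tmul _ _).symm⟩
  | add y z _ _ hy hz =>
    obtain ⟨a, rfl⟩ := hy
    obtain ⟨b, rfl⟩ := hz
    exact ⟨a + b, (add_tmul _ _ _).symm⟩
  | smul c y _ hy =>
    obtain ⟨a, rfl⟩ := hy
    exact ⟨c • a, (smul_tmul' _ _ _).symm⟩

-- Instance search does not find `IsScalarTower ℤ ℤ R` for the given `Module ℤ R`, hence the `@`.
def rootReflection {R : Type*} [AddCommGroup R] [Module ℤ R] (BR : R →ₗ[ℤ] R →ₗ[ℤ] ℤ) (β : R) :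
    R →ₗ[ℤ] R :=
  LinearMap.id - @LinearMap.smulRight ℤ ℤ R R _ _ _ _ _ _ _ _
    (@IsScalarTower.left ℤ R _ Module.toDistribMulAction.toMulAction) (BR β) β

section RootSublattice

variable {R : Type*} [AddCommGroup R] [Module ℤ R] {BR : R →ₗ[ℤ] R →ₗ[ℤ] ℤ} {β : R}

noncomputable def contractRoot (BR : R →ₗ[ℤ] R →ₗ[ℤ] ℤ) (β : R) :
    (ℤ × ℤ) ⊗[ℤ] R →ₗ[ℤ] ℤ × ℤ :=
  TensorProduct.rid ℤ (ℤ × ℤ) ∘ₗ (BR β).lTensor (ℤ × ℤ)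

theorem lTensor_rootReflection_apply (x : (ℤ × ℤ) ⊗[ℤ] R) :
    (rootReflection BR β).lTensor (ℤ × ℤ) x = x - contractRoot BR β x ⊗ₜ β := by
  rw [rootReflection, LinearMap.lTensor_sub, LinearMap.lTensor_id, LinearMap.sub_apply,
    LinearMap.lTensor_smulRight_apply]
  rfl

theorem contractRoot_tmul_root (hβ : BR β β = 2) (a : ℤ × ℤ) :
    contractRoot BR β (a ⊗ₜ β) = (2 : ℤ) • a := by
  show TensorProduct.rid ℤ (ℤ × ℤ) ((BR β).lTensor (ℤ × ℤ) (a ⊗ₜ β)) = _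
  rw [LinearMap.lTensor_tmul, TensorProduct.rid_tmul, hβ]

theorem lTensor_rootReflection_of_mem_A2beta (hβ : BR β β = 2) {m : (ℤ × ℤ) ⊗[ℤ] R}
    (hm : m ∈ A2beta R β) :
    (rootReflection BR β).lTensor (ℤ × ℤ) m = -m := by
  obtain ⟨a, rfl⟩ := mem_A2beta_iff.1 hm
  rw [lTensor_rootReflection_apply, contractRoot_tmul_root hβ, two_smul, add_tmul]
  abel

variable {Bt : (ℤ × ℤ) ⊗[ℤ] R →ₗ[ℤ] (ℤ × ℤ) ⊗[ℤ] R →ₗ[ℤ] ℤ}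

theorem apply_tmul_root_eq_B2 (hBRsymm : ∀ x y, BR x y = BR y x)
    (hBt : ∀ a a' r r', Bt (a ⊗ₜ r) (a' ⊗ₜ r') = B2 a a' * BR r r')
    (x : (ℤ × ℤ) ⊗[ℤ] R) (a' : ℤ × ℤ) :
    Bt x (a' ⊗ₜ β) = B2 (contractRoot BR β x) a' := by
  have hflip : BR.flip β = BR β := LinearMap.ext fun r => hBRsymm r β
  have := TensorProduct.productForm_apply_tmul_right B2Bilin BR Bt hBt x a' β
  rwa [hflip] at this

theorem mem_annih_A2beta_iff {x : (ℤ × ℤ) ⊗[ℤ] R} :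
    x ∈ annih Bt (A2beta R β) ↔ ∀ a : ℤ × ℤ, Bt x (a ⊗ₜ β) = 0 := by
  refine ⟨fun hx a => hx _ (mem_A2beta_iff.2 ⟨a, rfl⟩), fun hx m hm => ?_⟩
  obtain ⟨a, rfl⟩ := mem_A2beta_iff.1 hm
  exact hx a

variable (hBRsymm : ∀ x y, BR x y = BR y x)
  (hBt : ∀ a a' r r', Bt (a ⊗ₜ r) (a' ⊗ₜ r') = B2 a a' * BR r r')
include hBRsymm hBt

theorem two_smul_mem_A2beta_sup_annih (hβ : BR β β = 2) (x : (ℤ × ℤ) ⊗[ℤ] R) :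
    (2 : ℤ) • x ∈ A2beta R β ⊔ annih Bt (A2beta R β) := by
  have hsplit : (2 : ℤ) • x =
      contractRoot BR β x ⊗ₜ β + ((2 : ℤ) • x - contractRoot BR β x ⊗ₜ β) := by
    abel
  rw [hsplit]
  refine Submodule.add_mem_sup (mem_A2beta_iff.2 ⟨_, rfl⟩) (mem_annih_A2beta_iff.2 fun a => ?_)
  rw [map_sub, map_smul, LinearMap.sub_apply, LinearMap.smul_apply, hBt, hβ,
    apply_tmul_root_eq_B2 hBRsymm hBt, smul_eq_mul]
  ring

theorem lTensor_rootReflection_of_mem_annih {x : (ℤ × ℤ) ⊗[ℤ] R}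
    (hx : x ∈ annih Bt (A2beta R β)) :
    (rootReflection BR β).lTensor (ℤ × ℤ) x = x := by
  have hzero : contractRoot BR β x = 0 := eq_zero_of_B2_eq_zero fun a => by
    rw [← apply_tmul_root_eq_B2 hBRsymm hBt]
    exact mem_annih_A2beta_iff.1 hx a
  rw [lTensor_rootReflection_apply, hzero, zero_tmul, sub_zero]

end RootSublattice

/-- for a root `β` of `R` (i.e. `B_R(β,β) = 2`) and
`M = A₂⊗ℤβ ⊆ A₂⊗R` with the product form: (a) `2(A₂⊗R) ⊆ M + Ann(M)`, i.e.
`M` is RSSD in `A₂⊗R`; and (b) `id⊗r_β` is `−1` on `M` and `+1` on `Ann(M)`,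
i.e. it coincides with the RSSD involution `t_M`. -/
theorem stmt_16 (R : Type*) [AddCommGroup R] [Module ℤ R]
    (BR : R →ₗ[ℤ] R →ₗ[ℤ] ℤ)
    (hBRsymm : ∀ x y, BR x y = BR y x)
    (Bt : ((ℤ × ℤ) ⊗[ℤ] R) →ₗ[ℤ] ((ℤ × ℤ) ⊗[ℤ] R) →ₗ[ℤ] ℤ)
    (hBt : ∀ (a a' : ℤ × ℤ) (r r' : R),
      Bt (a ⊗ₜ[ℤ] r) (a' ⊗ₜ[ℤ] r') = B2 a a' * BR r r')
    (β : R) (hβ : BR β β = 2) :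
    (∀ x : (ℤ × ℤ) ⊗[ℤ] R,
      (2 : ℤ) • x ∈ A2beta R β ⊔ annih Bt (A2beta R β)) ∧
    (∀ m ∈ A2beta R β,
      TensorProduct.map LinearMap.id
        (LinearMap.id - @LinearMap.smulRight ℤ ℤ R R _ _ _ _ _ _ _ _
          (@IsScalarTower.left ℤ R _ Module.toDistribMulAction.toMulAction) (BR β) β) m = -m) ∧
    (∀ x ∈ annih Bt (A2beta R β),
      TensorProduct.map LinearMap.id
        (LinearMap.id - @LinearMap.smulRight ℤ ℤ R R _ _ _ _ _ _ _ _
          (@IsScalarTower.left ℤ R _ Module.toDistribMulAction.toMulAction) (BR β) β) x = x) :=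
  ⟨two_smul_mem_A2beta_sup_annih hBRsymm hBt hβ,
    fun _ hm => lTensor_rootReflection_of_mem_A2beta hβ hm,
    fun _ hx => lTensor_rootReflection_of_mem_annih hBRsymm hBt hx⟩
end

section
/- With the above notation: (1) every x ∈ L_C satisfies (x,x) ∈ 2ℤ (i.e. the lattice L_C is even) if and only if every codeword c ∈ C has even weight wt(c); (2) if every nonzero codeword of C has weight at least 4, then no x ∈ L_C satisfies (x,x) = 2, i.e. L_C has no vectors of norm 2. -/
set_option synthInstance.maxHeartbeats 1000000
set_option maxHeartbeats 1000000
noncomputable def omegaE : ℂ := Complex.exp (2 * Real.pi * Complex.I / 3)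

lemma omega_eq : omegaE = Complex.exp (((2 * Real.pi / 3 : ℝ) : ℂ) * Complex.I) := by
  unfold omegaE; push_cast; ring_nf

lemma omega_im_pos : 0 < omegaE.im := by
  rw [omega_eq, Complex.exp_mul_I, ← Complex.ofReal_cos, ← Complex.ofReal_sin]
  simp only [Complex.add_im, Complex.ofReal_im, Complex.mul_im, Complex.ofReal_re,
    Complex.I_im, Complex.I_re, mul_zero, mul_one, zero_add, add_zero]
  apply Real.sin_pos_of_pos_of_lt_pi
  · positivity
  · nlinarith [Real.pi_pos]

lemma omega_normSq : Complex.normSq omegaE = 1 := by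
  rw [omega_eq, Complex.exp_mul_I, ← Complex.ofReal_cos, ← Complex.ofReal_sin]
  rw [Complex.normSq_apply]
  simp only [Complex.add_im, Complex.add_re, Complex.ofReal_im, Complex.mul_im, Complex.mul_re,
    Complex.ofReal_re, Complex.I_im, Complex.I_re, mul_zero, mul_one, zero_add, add_zero,
    zero_mul, zero_sub, sub_zero]
  nlinarith [Real.sin_sq_add_cos_sq (2 * Real.pi / 3)]

lemma omega_pow_three : omegaE ^ 3 = 1 := by
  unfold omegaE
  rw [← Complex.exp_nat_mul]
  have : ((3:ℕ):ℂ) * (2 * Real.pi * Complex.I / 3) = 2 * Real.pi * Complex.I := by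
    push_cast; ring
  rw [this, Complex.exp_two_pi_mul_I]

lemma omega_ne_one : omegaE ≠ 1 := by
  intro h
  have := omega_im_pos
  rw [h] at this
  simp at this

lemma omega_sq_eq : omegaE ^ 2 = -1 - omegaE := by
  have h : (omegaE - 1) * (omegaE ^ 2 + omegaE + 1) = 0 := by
    linear_combination omega_pow_three
  rcases mul_eq_zero.mp h with h1 | h2
  · exact absurd (sub_eq_zero.mp h1) omega_ne_one
  · linear_combination h2

lemma omega_re : omegaE.re = -(1/2) := by
  have him : omegaE.im ≠ 0 := ne_of_gt omega_im_pos
  have h : (omegaE ^ 2).im = (-1 - omegaE).im := by rw [omega_sq_eq]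
  simp [Complex.sub_im, Complex.one_im, pow_two, Complex.mul_im] at h
  have h2 : (2 * omegaE.re + 1) * omegaE.im = 0 := by linarith
  rcases mul_eq_zero.mp h2 with h3 | h3
  · linarith
  · exact absurd h3 him

lemma omega_im_sq : omegaE.im ^ 2 = 3 / 4 := by
  have := omega_normSq
  rw [Complex.normSq_apply, omega_re] at this
  nlinarith

noncomputable def Eis : Subring ℂ := Subring.closure {omegaE}

lemma omega_mem_Eis : omegaE ∈ Eis := Subring.subset_closure rfl

noncomputable def repS : Subring ℂ where
  carrier := {z | ∃ a b : ℤ, z = (a : ℂ) + (b : ℂ) * omegaE}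
  zero_mem' := ⟨0, 0, by push_cast; ring⟩
  one_mem' := ⟨1, 0, by push_cast; ring⟩
  add_mem' := by
    rintro z w ⟨a, b, rfl⟩ ⟨c, d, rfl⟩
    exact ⟨a + c, b + d, by push_cast; ring⟩
  neg_mem' := by
    rintro z ⟨a, b, rfl⟩
    exact ⟨-a, -b, by push_cast; ring⟩
  mul_mem' := by
    rintro z w ⟨a, b, rfl⟩ ⟨c, d, rfl⟩
    refine ⟨a * c - b * d, a * d + b * c - b * d, ?_⟩
    push_cast
    linear_combination (b : ℂ) * d * omega_sq_eq

lemma eis_rep (z : Eis) : ∃ a b : ℤ, (z : ℂ) = (a : ℂ) + (b : ℂ) * omegaE := by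
  have h : (z : ℂ) ∈ repS := by
    have : Eis ≤ repS := Subring.closure_le.mpr (by
      rintro w rfl
      exact ⟨0, 1, by push_cast; ring⟩)
    exact this z.2
  exact h

lemma rep_unique {a b a' b' : ℤ} (h : (a : ℂ) + (b : ℂ) * omegaE = (a' : ℂ) + (b' : ℂ) * omegaE) :
    a = a' ∧ b = b' := by
  have him : omegaE.im ≠ 0 := ne_of_gt omega_im_pos
  have hI : ((a : ℂ) + (b : ℂ) * omegaE).im = ((a' : ℂ) + (b' : ℂ) * omegaE).im := by rw [h]
  simp [Complex.add_im, Complex.mul_im, Complex.intCast_im, Complex.intCast_re] at hI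
  have hbz : b = b' := hI.resolve_right him
  subst hbz
  have hR : ((a : ℂ) + (b : ℂ) * omegaE).re = ((a' : ℂ) + (b : ℂ) * omegaE).re := by rw [h]
  simp [Complex.add_re, Complex.mul_re, Complex.intCast_im, Complex.intCast_re] at hR
  exact ⟨by exact_mod_cast hR, rfl⟩

lemma normSq_rep (a b : ℤ) :
    Complex.normSq ((a : ℂ) + (b : ℂ) * omegaE) = ((a ^ 2 - a * b + b ^ 2 : ℤ) : ℝ) := by
  rw [Complex.normSq_apply]
  simp only [Complex.add_re, Complex.add_im, Complex.mul_re, Complex.mul_im,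
    Complex.intCast_re, Complex.intCast_im, zero_mul, mul_zero, sub_zero, zero_add, add_zero]
  have h1 := omega_re
  have h2 := omega_im_sq
  push_cast
  linear_combination (b:ℝ)^2 * h2 + ((2*a*b : ℝ) + (b:ℝ)^2*(omegaE.re - 1/2)) * h1

lemma pos_norm {c d : ℤ} (h : ¬(c = 0 ∧ d = 0)) : 1 ≤ c ^ 2 - c * d + d ^ 2 := by
  have h4 : 4 * (c ^ 2 - c * d + d ^ 2) = (2 * c - d) ^ 2 + 3 * d ^ 2 := by ring
  have hne : (2 * c - d) ^ 2 + 3 * d ^ 2 ≠ 0 := by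
    intro h0
    have hd : d = 0 := by nlinarith [sq_nonneg (2 * c - d), sq_nonneg d]
    have hc : 2 * c - d = 0 := by nlinarith [sq_nonneg (2 * c - d), sq_nonneg d]
    exact h ⟨by omega, hd⟩
  have h5 : 0 < (2 * c - d) ^ 2 + 3 * d ^ 2 :=
    lt_of_le_of_ne (by positivity) (Ne.symm hne)
  have h6 : 0 < c ^ 2 - c * d + d ^ 2 := by linarith
  exact h6

lemma eis_zero_iff (z : Eis) {a b : ℤ} (h : (z : ℂ) = (a : ℂ) + (b : ℂ) * omegaE) :
    z = 0 ↔ (a = 0 ∧ b = 0) := by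
  constructor
  · intro hz
    rw [hz] at h
    have h0 : ((0 : ℤ) : ℂ) + ((0 : ℤ) : ℂ) * omegaE = (a : ℂ) + (b : ℂ) * omegaE := by
      rw [← h]; push_cast; ring
    have := rep_unique h0
    exact ⟨this.1.symm, this.2.symm⟩
  · rintro ⟨rfl, rfl⟩
    apply Subtype.ext
    simpa using h

lemma coe_two_eis : ((2 : Eis) : ℂ) = 2 := rfl

lemma mem_two_iff (z : Eis) {a b : ℤ} (h : (z : ℂ) = (a : ℂ) + (b : ℂ) * omegaE) :
    z ∈ Ideal.span ({2} : Set Eis) ↔ (Even a ∧ Even b) := by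
  rw [Ideal.mem_span_singleton]
  constructor
  · rintro ⟨w, hw⟩
    obtain ⟨c, d, hcd⟩ := eis_rep w
    have hz : (z : ℂ) = ((2 * c : ℤ) : ℂ) + ((2 * d : ℤ) : ℂ) * omegaE := by
      rw [hw]
      push_cast [coe_two_eis, hcd]
      ring
    have := rep_unique (h.symm.trans hz)
    exact ⟨⟨c, by omega⟩, ⟨d, by omega⟩⟩
  · rintro ⟨⟨c, hc⟩, ⟨d, hd⟩⟩
    refine ⟨(c : Eis) + (d : Eis) * ⟨omegaE, omega_mem_Eis⟩, ?_⟩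
    apply Subtype.ext
    push_cast [coe_two_eis]
    rw [h, hc, hd]
    push_cast
    ring

lemma parity_lemma (a b : ℤ) : Even (a ^ 2 - a * b + b ^ 2) ↔ (Even a ∧ Even b) := by
  have key : ∀ m : ℤ, Even m ↔ (m : ZMod 2) = 0 := fun m => by
    rw [ZMod.intCast_zmod_eq_zero_iff_dvd]
    exact ⟨fun ⟨r, hr⟩ => ⟨r, by omega⟩, fun ⟨r, hr⟩ => ⟨r, by omega⟩⟩
  rw [key, key, key]
  push_cast
  generalize (a : ZMod 2) = α
  generalize (b : ZMod 2) = β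
  revert α β
  decide

lemma eis_key (z : Eis) : ∃ N : ℤ, Complex.normSq (z : ℂ) = (N : ℝ) ∧ 0 ≤ N ∧
    (z ∈ Ideal.span ({2} : Set Eis) ↔ Even N) ∧
    (z ∈ Ideal.span ({2} : Set Eis) → z ≠ 0 → 4 ≤ N) := by
  obtain ⟨a, b, h⟩ := eis_rep z
  refine ⟨a ^ 2 - a * b + b ^ 2, by rw [h, normSq_rep], by nlinarith [sq_nonneg (2*a-b), sq_nonneg b], ?_, ?_⟩
  · rw [mem_two_iff z h, parity_lemma]
  · intro hmem hne
    obtain ⟨⟨c, hc⟩, ⟨d, hd⟩⟩ := (mem_two_iff z h).mp hmem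
    have hcd : ¬(c = 0 ∧ d = 0) := by
      rintro ⟨rfl, rfl⟩
      exact hne ((eis_zero_iff z h).mpr ⟨by omega, by omega⟩)
    have h1 := pos_norm hcd
    have ha : a = 2 * c := by omega
    have hb : b = 2 * d := by omega
    subst ha; subst hb
    nlinarith [h1]

lemma int_even_zmod (m : ℤ) : Even m ↔ (m : ZMod 2) = 0 := by
  rw [ZMod.intCast_zmod_eq_zero_iff_dvd]
  exact ⟨fun ⟨r, hr⟩ => ⟨r, by omega⟩, fun ⟨r, hr⟩ => ⟨r, by omega⟩⟩

lemma nat_even_zmod (m : ℕ) : Even m ↔ (m : ZMod 2) = 0 := by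
  rw [ZMod.natCast_eq_zero_iff]
  exact ⟨fun ⟨r, hr⟩ => ⟨r, by omega⟩, fun ⟨r, hr⟩ => ⟨r, by omega⟩⟩

lemma int_odd_zmod (m : ℤ) (h : ¬ Even m) : (m : ZMod 2) = 1 := by
  rcases Int.even_or_odd m with he | ⟨k, hk⟩
  · exact absurd he h
  · subst hk
    push_cast
    have h2 : (2 : ZMod 2) = 0 := rfl
    rw [h2]
    ring

lemma sum_parity {n : ℕ} (N : Fin n → ℤ) (P : Fin n → Prop) [DecidablePred P]
    (h : ∀ i, ¬ Even (N i) ↔ P i) :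
    (Even (∑ i, N i) ↔ Even (Finset.univ.filter P).card) := by
  rw [int_even_zmod, nat_even_zmod]
  have key : ((∑ i, N i : ℤ) : ZMod 2) = ((Finset.univ.filter P).card : ZMod 2) := by
    push_cast
    rw [Finset.card_filter]
    push_cast
    apply Finset.sum_congr rfl
    intro i _
    by_cases hp : P i
    · rw [if_pos hp, int_odd_zmod _ (fun he => absurd ((h i).mpr hp) (not_not.mpr he))]
    · rw [if_neg hp, (int_even_zmod (N i)).mp (not_not.mp (fun hne => hp ((h i).mp hne)))]
  rw [key]

lemma card_filter_eq {n : ℕ} (P : Fin n → Prop) [DecidablePred P] :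
    Nat.card {i : Fin n | P i} = (Finset.univ.filter P).card := by
  simp [Nat.card_eq_fintype_card, Fintype.card_subtype]

/-- for a linear `𝔽₄`-code `C ⊆ (𝓔/2𝓔)ⁿ` and the associated
lattice `L_C = {x ∈ 𝓔ⁿ : x mod 2𝓔 ∈ C}` with norm `(x,x) = Σᵢ |xᵢ|²`:
(1) `L_C` is even iff every codeword of `C` has even Hamming weight;
(2) if every nonzero codeword of `C` has weight at least 4, then `L_C` has no
vectors of norm 2. -/
theorem stmt_17 (n : ℕ)
    (C : Submodule (Eis ⧸ Ideal.span ({2} : Set Eis))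
      (Fin n → Eis ⧸ Ideal.span ({2} : Set Eis))) :
    ((∀ x : Fin n → Eis,
        (fun i => Ideal.Quotient.mk (Ideal.span ({2} : Set Eis)) (x i)) ∈ C →
        ∃ k : ℤ, (∑ i, Complex.normSq (x i : ℂ)) = 2 * k) ↔
      (∀ c ∈ C, Even (Nat.card {i : Fin n | c i ≠ 0}))) ∧
    ((∀ c ∈ C, c ≠ 0 → 4 ≤ Nat.card {i : Fin n | c i ≠ 0}) →
      ∀ x : Fin n → Eis,
        (fun i => Ideal.Quotient.mk (Ideal.span ({2} : Set Eis)) (x i)) ∈ C →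
        (∑ i, Complex.normSq (x i : ℂ)) ≠ 2) := by
  classical
  set I : Ideal Eis := Ideal.span ({2} : Set Eis) with hI
  -- basic facts for each x : Fin n → Eis
  have main : ∀ x : Fin n → Eis, ∃ N : Fin n → ℤ,
      (∀ i, Complex.normSq ((x i : ℂ)) = (N i : ℝ)) ∧ (∀ i, 0 ≤ N i) ∧
      (∀ i, (x i ∈ I ↔ Even (N i))) ∧ (∀ i, x i ∈ I → x i ≠ 0 → 4 ≤ N i) := by
    intro x
    choose N hN h0 hEv h4 using fun i => eis_key (x i)
    exact ⟨N, hN, h0, hEv, h4⟩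
  constructor
  · constructor
    · -- lattice even → code even weight
      intro hlat c hc
      choose x hx using fun i => Ideal.Quotient.mk_surjective (I := I) (c i)
      have hxc : (fun i => Ideal.Quotient.mk I (x i)) = c := funext hx
      obtain ⟨k, hk⟩ := hlat x (by rw [hxc]; exact hc)
      obtain ⟨N, hN, h0, hEv, h4⟩ := main x
      have hsum : (∑ i, N i : ℤ) = 2 * k := by
        have : ((∑ i, N i : ℤ) : ℝ) = ∑ i, Complex.normSq ((x i : ℂ)) := by
          push_cast
          exact (Finset.sum_congr rfl fun i _ => (hN i).symm)
        rw [hk] at this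
        exact_mod_cast this
      have heven : Even (∑ i, N i) := ⟨k, by omega⟩
      rw [card_filter_eq]
      rw [← sum_parity N (fun i => c i ≠ 0) ?_]
      · exact heven
      · intro i
        show ¬ Even (N i) ↔ c i ≠ 0
        have hiff : (Ideal.Quotient.mk I (x i) = 0) ↔ Even (N i) :=
          Ideal.Quotient.eq_zero_iff_mem.trans (hEv i)
        rw [hx i] at hiff
        exact not_iff_not.mpr hiff.symm
    · -- code even weight → lattice even
      intro hcode x hx
      obtain ⟨N, hN, h0, hEv, h4⟩ := main x
      have hwt := hcode _ hx
      rw [card_filter_eq] at hwt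
      have heven : Even (∑ i, N i) := by
        rw [sum_parity N (fun i => Ideal.Quotient.mk I (x i) ≠ 0) ?_]
        · exact hwt
        · intro i
          show ¬ Even (N i) ↔ Ideal.Quotient.mk I (x i) ≠ 0
          exact not_iff_not.mpr (Ideal.Quotient.eq_zero_iff_mem.trans (hEv i)).symm
      obtain ⟨k, hk⟩ := heven
      refine ⟨k, ?_⟩
      have : (∑ i, Complex.normSq ((x i : ℂ))) = ((∑ i, N i : ℤ) : ℝ) := by
        push_cast
        exact Finset.sum_congr rfl fun i _ => hN i
      rw [this, hk]
      push_cast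
      ring
  · -- min weight 4 → no norm 2 vectors
    intro hmin x hx heq
    obtain ⟨N, hN, h0, hEv, h4⟩ := main x
    have hsum : (∑ i, N i : ℤ) = 2 := by
      have : ((∑ i, N i : ℤ) : ℝ) = ∑ i, Complex.normSq ((x i : ℂ)) := by
        push_cast
        exact (Finset.sum_congr rfl fun i _ => (hN i).symm)
      rw [heq] at this
      exact_mod_cast this
    by_cases hc0 : (fun i => Ideal.Quotient.mk I (x i)) = 0
    · -- all coordinates in 2𝓔; each N i is 0 or ≥ 4
      have hall : ∀ i, x i ∈ I := fun i =>
        Ideal.Quotient.eq_zero_iff_mem.mp (congrFun hc0 i)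
      have hzero : ∀ i, N i = 0 := by
        intro i
        by_contra hne
        have hx0 : x i ≠ 0 := by
          intro h0'
          apply hne
          have := hN i
          rw [h0'] at this
          simp at this
          exact_mod_cast this.symm
        have h4i := h4 i (hall i) hx0
        have hle : N i ≤ ∑ j, N j :=
          Finset.single_le_sum (fun j _ => h0 j) (Finset.mem_univ i)
        omega
      rw [Finset.sum_congr rfl fun i _ => hzero i] at hsum
      simp at hsum
    · have hwt := hmin _ hx hc0
      rw [card_filter_eq] at hwt
      set T := Finset.univ.filter (fun i => Ideal.Quotient.mk I (x i) ≠ 0) with hT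
      have hge1 : ∀ i ∈ T, 1 ≤ N i := by
        intro i hi
        rw [hT, Finset.mem_filter] at hi
        have hodd : ¬ Even (N i) := by
          rw [← hEv i, ← Ideal.Quotient.eq_zero_iff_mem]
          exact hi.2
        have := h0 i
        rcases Int.even_or_odd (N i) with he | ⟨r, hr⟩
        · exact absurd he hodd
        · omega
      have h1 : (T.card : ℤ) ≤ ∑ i ∈ T, N i := by
        calc (T.card : ℤ) = ∑ _i ∈ T, (1 : ℤ) := by simp
        _ ≤ ∑ i ∈ T, N i := Finset.sum_le_sum hge1
      have h2 : ∑ i ∈ T, N i ≤ ∑ i, N i :=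
        Finset.sum_le_sum_of_subset_of_nonneg (Finset.subset_univ T)
          (fun i _ _ => h0 i)
      have : (4 : ℤ) ≤ T.card := by exact_mod_cast hwt
      omega
end
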